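/- Parallel reduction commutes with composition of FMC terms: for any marked terms M^X and N^X, the marked reduct of the composition equals the composition of the marked reducts, i.e. (M;N)_X = M_X ; N_X. -/
import Mathlib


/-- Terms of the Functional Machine Calculus over a set `A` of locations,
in de Bruijn representation (so terms are automatically identified up to
α-equivalence): nil, variable prefix, push/application on a location,
and pop/abstraction on a location. -/
inductive Tm (A : Type) : Type
  | star : Tm A
  | var  : Nat → Tm A → Tm A
  | push : Tm A → A → Tm A → Tm A
  | pop  : A → Tm A → Tm A

namespace Tm

variable {A : Type}

/-- Lifting of a renaming under a binder. -/
def liftF (f : Nat → Nat) : Nat → Nat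
  | 0 => 0
  | n+1 => f n + 1

/-- Renaming of de Bruijn indices. -/
def rename (f : Nat → Nat) : Tm A → Tm A
  | star => star
  | var n M => var (f n) (rename f M)
  | push N a M => push (rename f N) a (rename f M)
  | pop a M => pop a (rename (liftF f) M)

/-- Capture-avoiding composition `N ; M`. -/
def comp : Tm A → Tm A → Tm A
  | star, P => P
  | var n N, P => var n (comp N P)
  | push Q a N, P => push Q a (comp N P)
  | pop a N, P => pop a (comp N (rename Nat.succ P))

/-- Lifting of a substitution under a binder. -/
def liftS (σ : Nat → Tm A) : Nat → Tm A
  | 0 => var 0 star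
  | n+1 => rename Nat.succ (σ n)

/-- Capture-avoiding simultaneous substitution; note
`{N/x}(x.M) = N ; {N/x}M`. -/
def subst (σ : Nat → Tm A) : Tm A → Tm A
  | star => star
  | var n M => comp (σ n) (subst σ M)
  | push N a M => push (subst σ N) a (subst σ M)
  | pop a M => pop a (subst (liftS σ) M)

/-- Capture-avoiding substitution `{N/x}M` of `N` for the variable
bound immediately outside `M`. -/
def subst1 (N : Tm A) : Tm A → Tm A :=
  subst (fun n => match n with | 0 => N | n+1 => var n star)

end Tm

/-- Head contexts `H ::= {} | [M]a.H | a<x>.H`. -/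
inductive Hd (A : Type) : Type
  | hole : Hd A
  | push : Tm A → A → Hd A → Hd A
  | pop  : A → Hd A → Hd A

namespace Hd

variable {A : Type}

/-- Plugging a term into the hole of a head context (binders of `H` capture). -/
def plug : Hd A → Tm A → Tm A
  | hole, M => M
  | push N a H, M => Tm.push N a (plug H M)
  | pop a H, M => Tm.pop a (plug H M)

/-- The number of binders of a head context. -/
def binders : Hd A → Nat
  | hole => 0
  | push _ _ H => binders H
  | pop _ H => binders H + 1

/-- The locations occurring along the spine of a head context. -/
def locs : Hd A → List A
  | hole => []
  | push _ a H => a :: locs H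
  | pop a H => a :: locs H

end Hd

mutual
/-- Redex-marked FMC terms: a term together with a selection of marked
β-redexes, represented by the `redex` constructor `[N]a✓.H.✓a<x>.M`. -/
inductive MTm (A : Type) : Type
  | star : MTm A
  | var  : Nat → MTm A → MTm A
  | push : MTm A → A → MTm A → MTm A
  | pop  : A → MTm A → MTm A
  | redex : MTm A → A → MHd A → MTm A → MTm A
/-- Head contexts of redex-marked terms. -/
inductive MHd (A : Type) : Type
  | hole : MHd A
  | push : MTm A → A → MHd A → MHd A
  | pop  : A → MHd A → MHd A
end

namespace MHd
variable {A : Type}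
/-- The number of binders of a marked head context. -/
def binders : MHd A → Nat
  | hole => 0
  | push _ _ H => binders H
  | pop _ H => binders H + 1
/-- The locations occurring along the spine of a marked head context. -/
def locs : MHd A → List A
  | hole => []
  | push _ a H => a :: locs H
  | pop a H => a :: locs H
end MHd

mutual
/-- Well-formedness of a marked term: every marked redex is a genuine
β-redex, i.e. its location does not occur in the intervening head context
(in de Bruijn style the freshness condition on binders is automatic). -/
def MTm.WF {A : Type} : MTm A → Prop
  | .star => True
  | .var _ M => M.WF
  | .push N _ M => N.WF ∧ M.WF
  | .pop _ M => M.WF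
  | .redex N a H M => a ∉ H.locs ∧ N.WF ∧ H.WF ∧ M.WF
def MHd.WF {A : Type} : MHd A → Prop
  | .hole => True
  | .push N _ H => N.WF ∧ H.WF
  | .pop _ H => H.WF
end

mutual
/-- The underlying (unmarked) term of a marked term. -/
def MTm.erase {A : Type} : MTm A → Tm A
  | .star => .star
  | .var n M => .var n M.erase
  | .push N a M => .push N.erase a M.erase
  | .pop a M => .pop a M.erase
  | .redex N a H M => .push N.erase a (H.erase.plug (.pop a M.erase))
/-- The underlying head context of a marked head context. -/
def MHd.erase {A : Type} : MHd A → Hd A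
  | .hole => .hole
  | .push N a H => .push N.erase a H.erase
  | .pop a H => .pop a H.erase
end

mutual
/-- The marked reduct `(M^X)_X`: the simultaneous contraction of all
marked redexes. -/
def MTm.reduct {A : Type} : MTm A → Tm A
  | .star => .star
  | .var n M => .var n M.reduct
  | .push N a M => .push N.reduct a M.reduct
  | .pop a M => .pop a M.reduct
  | .redex N _ H M =>
      H.reduct.plug (Tm.subst1 (Tm.rename (· + H.reduct.binders) N.reduct) M.reduct)
/-- The marked reduct of a marked head context. -/
def MHd.reduct {A : Type} : MHd A → Hd A
  | .hole => .hole
  | .push N a H => .push N.reduct a H.reduct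
  | .pop a H => .pop a H.reduct
end

mutual
/-- Renaming of de Bruijn indices in a marked term. -/
def MTm.rename {A : Type} (f : Nat → Nat) : MTm A → MTm A
  | .star => .star
  | .var n M => .var (f n) (M.rename f)
  | .push N a M => .push (N.rename f) a (M.rename f)
  | .pop a M => .pop a (M.rename (Tm.liftF f))
  | .redex N a H M =>
      .redex (N.rename f) a (H.rename f) (M.rename (Tm.liftF^[H.binders + 1] f))
/-- Renaming of de Bruijn indices in a marked head context. -/
def MHd.rename {A : Type} (f : Nat → Nat) : MHd A → MHd A
  | .hole => .hole
  | .push N a H => .push (N.rename f) a (H.rename f)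
  | .pop a H => .pop a (H.rename (Tm.liftF f))
end

/-- Capture-avoiding composition `N ; M` of marked terms. -/
def MTm.comp {A : Type} : MTm A → MTm A → MTm A
  | .star, P => P
  | .var n N, P => .var n (N.comp P)
  | .push Q a N, P => .push Q a (N.comp P)
  | .pop a N, P => .pop a (N.comp (P.rename Nat.succ))
  | .redex N a H M, P => .redex N a H (M.comp (P.rename (· + (H.binders + 1))))

/-- Lifting of a marked substitution under a binder. -/
def MTm.liftS {A : Type} (σ : Nat → MTm A) : Nat → MTm A
  | 0 => .var 0 .star
  | n+1 => (σ n).rename Nat.succ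

mutual
/-- Capture-avoiding simultaneous substitution of marked terms in a
marked term. -/
def MTm.subst {A : Type} (σ : Nat → MTm A) : MTm A → MTm A
  | .star => .star
  | .var n M => (σ n).comp (M.subst σ)
  | .push N a M => .push (N.subst σ) a (M.subst σ)
  | .pop a M => .pop a (M.subst (MTm.liftS σ))
  | .redex N a H M =>
      .redex (N.subst σ) a (H.subst σ) (M.subst (MTm.liftS^[H.binders + 1] σ))
/-- Capture-avoiding substitution in a marked head context. -/
def MHd.subst {A : Type} (σ : Nat → MTm A) : MHd A → MHd A
  | .hole => .hole
  | .push N a H => .push (N.subst σ) a (H.subst σ)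
  | .pop a H => .pop a (H.subst (MTm.liftS σ))
end

/-- Capture-avoiding substitution `{N/x}M` on marked terms. -/
def MTm.subst1 {A : Type} (N : MTm A) : MTm A → MTm A :=
  MTm.subst (fun n => match n with | 0 => N | n+1 => .var n .star)


namespace Tm
variable {A : Type}

theorem liftF_ext {f g : Nat → Nat} (h : ∀ n, f n = g n) : ∀ n, liftF f n = liftF g n
  | 0 => rfl
  | n+1 => by simp [liftF, h]

theorem rename_ext {f g : Nat → Nat} (h : ∀ n, f n = g n) :
    ∀ M : Tm A, rename f M = rename g M
  | star => rfl
  | var n M => by simp [rename, h, rename_ext h M]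
  | push N a M => by simp [rename, rename_ext h N, rename_ext h M]
  | pop a M => by simp [rename, rename_ext (liftF_ext h) M]

theorem rename_id : ∀ M : Tm A, rename (fun n => n) M = M
  | star => rfl
  | var n M => by simp [rename, rename_id M]
  | push N a M => by simp [rename, rename_id N, rename_id M]
  | pop a M => by
      simp only [rename]
      rw [rename_ext (g := fun n => n), rename_id M]
      intro n; cases n <;> rfl

theorem rename_rename (f g : Nat → Nat) :
    ∀ M : Tm A, rename f (rename g M) = rename (fun n => f (g n)) M
  | star => rfl
  | var n M => by simp [rename, rename_rename f g M]
  | push N a M => by simp [rename, rename_rename f g N, rename_rename f g M]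
  | pop a M => by
      simp only [rename]
      rw [rename_rename (liftF f) (liftF g) M,
        rename_ext (g := liftF fun n => f (g n)) (fun n => by cases n <;> rfl)]

theorem rename_comp (f : Nat → Nat) :
    ∀ M P : Tm A, rename f (comp M P) = comp (rename f M) (rename f P)
  | star, P => rfl
  | var n M, P => by simp [comp, rename, rename_comp f M P]
  | push Q a M, P => by simp [comp, rename, rename_comp f M P]
  | pop a M, P => by
      simp only [comp, rename]
      rw [rename_comp (liftF f) M (rename Nat.succ P),
        rename_rename, rename_rename,
        rename_ext (f := fun n => liftF f (Nat.succ n)) (g := fun n => Nat.succ (f n))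
          (fun n => rfl)]

theorem comp_assoc : ∀ M N P : Tm A, comp (comp M N) P = comp M (comp N P)
  | star, _, _ => rfl
  | var n M, N, P => by simp [comp, comp_assoc M N P]
  | push Q a M, N, P => by simp [comp, comp_assoc M N P]
  | pop a M, N, P => by
      simp [comp, comp_assoc M (rename Nat.succ N) (rename Nat.succ P), rename_comp]

theorem subst_ext {σ τ : Nat → Tm A} (h : ∀ n, σ n = τ n) :
    ∀ M : Tm A, subst σ M = subst τ M
  | star => rfl
  | var n M => by simp [subst, h, subst_ext h M]
  | push N a M => by simp [subst, subst_ext h N, subst_ext h M]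
  | pop a M => by
      simp only [subst]
      rw [subst_ext (τ := liftS τ) (fun n => by cases n <;> simp [liftS, h]) M]

theorem subst_rename (σ : Nat → Tm A) (f : Nat → Nat) :
    ∀ M : Tm A, subst σ (rename f M) = subst (fun n => σ (f n)) M
  | star => rfl
  | var n M => by simp [subst, rename, subst_rename σ f M]
  | push N a M => by simp [subst, rename, subst_rename σ f N, subst_rename σ f M]
  | pop a M => by
      simp only [subst, rename]
      rw [subst_rename (liftS σ) (liftF f) M,
        subst_ext (τ := liftS fun n => σ (f n)) (fun n => by cases n <;> rfl)]

theorem rename_subst (f : Nat → Nat) (σ : Nat → Tm A) :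
    ∀ M : Tm A, rename f (subst σ M) = subst (fun n => rename f (σ n)) M
  | star => rfl
  | var n M => by simp [subst, rename_comp, rename_subst f σ M]
  | push N a M => by simp [subst, rename, rename_subst f σ N, rename_subst f σ M]
  | pop a M => by
      simp only [subst, rename]
      rw [rename_subst (liftF f) (liftS σ) M,
        subst_ext (τ := liftS fun n => rename f (σ n)) (fun n => by
          cases n with
          | zero => rfl
          | succ n =>
              simp only [liftS, rename_rename]
              exact rename_ext (fun m => rfl) (σ n))]

theorem subst_id : ∀ M : Tm A, subst (fun n => var n star) M = M
  | star => rfl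
  | var n M => by simp [subst, comp, subst_id M]
  | push N a M => by simp [subst, subst_id N, subst_id M]
  | pop a M => by
      simp only [subst]
      rw [subst_ext (τ := fun n => var n star) (fun n => by cases n <;> rfl),
        subst_id M]

theorem subst_comp (σ : Nat → Tm A) :
    ∀ M P : Tm A, subst σ (comp M P) = comp (subst σ M) (subst σ P)
  | star, P => rfl
  | var n M, P => by simp [comp, subst, subst_comp σ M P, comp_assoc]
  | push Q a M, P => by simp [comp, subst, subst_comp σ M P]
  | pop a M, P => by
      simp only [comp, subst]
      rw [subst_comp (liftS σ) M (rename Nat.succ P),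
        subst_rename, rename_subst,
        subst_ext (σ := fun n => liftS σ (Nat.succ n))
          (τ := fun n => rename Nat.succ (σ n)) (fun n => rfl)]

theorem subst1_comp (T : Tm A) (Q R : Tm A) :
    comp (subst1 T Q) R = subst1 T (comp Q (rename Nat.succ R)) := by
  simp only [subst1, subst_comp, subst_rename]
  rw [subst_ext (τ := fun n => var n star) (fun n => rfl), subst_id]

theorem rename_subst1 (g : Nat → Nat) (T M : Tm A) :
    rename g (subst1 T M) = subst1 (rename g T) (rename (liftF g) M) := by
  simp only [subst1, rename_subst, subst_rename]
  exact subst_ext (fun n => by cases n <;> rfl) M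

theorem liftF_iter_add (f : Nat → Nat) : ∀ (b n : Nat), liftF^[b] f (n + b) = f n + b
  | 0, n => rfl
  | b+1, n => by
      rw [Function.iterate_succ_apply']
      show liftF (liftF^[b] f) ((n + b) + 1) = f n + b + 1
      simp [liftF, liftF_iter_add f b n]

end Tm

namespace Hd
variable {A : Type}

/-- Renaming of de Bruijn indices in a head context. -/
def rename (f : Nat → Nat) : Hd A → Hd A
  | hole => hole
  | push N a H => push (Tm.rename f N) a (rename f H)
  | pop a H => pop a (rename (Tm.liftF f) H)

theorem binders_rename (f : Nat → Nat) : ∀ H : Hd A, (H.rename f).binders = H.binders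
  | hole => rfl
  | push N a H => by simp [rename, binders, binders_rename f H]
  | pop a H => by simp [rename, binders, binders_rename (Tm.liftF f) H]

theorem rename_plug (f : Nat → Nat) :
    ∀ (H : Hd A) (Q : Tm A),
      Tm.rename f (H.plug Q) = (H.rename f).plug (Tm.rename (Tm.liftF^[H.binders] f) Q)
  | hole, Q => rfl
  | push N a H, Q => by simp [plug, rename, Tm.rename, binders, rename_plug f H Q]
  | pop a H, Q => by
      simp only [plug, rename, Tm.rename, binders]
      rw [rename_plug (Tm.liftF f) H Q, ← Function.iterate_succ_apply]

theorem comp_plug :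
    ∀ (H : Hd A) (Q P : Tm A),
      Tm.comp (H.plug Q) P = H.plug (Tm.comp Q (Tm.rename (· + H.binders) P))
  | hole, Q, P => by
      simp only [plug, binders]
      rw [Tm.rename_ext (f := fun n => n + 0) (g := fun n => n) (fun n => rfl), Tm.rename_id]
  | push N a H, Q, P => by simp [plug, Tm.comp, binders, comp_plug H Q P]
  | pop a H, Q, P => by
      simp only [plug, Tm.comp, binders]
      rw [comp_plug H Q (Tm.rename Nat.succ P), Tm.rename_rename,
        Tm.rename_ext (f := fun n => Nat.succ n + H.binders)
          (g := fun n => n + (H.binders + 1))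
          (fun n => by show Nat.succ n + H.binders = n + (H.binders + 1); omega)]

end Hd

theorem MHd.binders_reduct {A : Type} : ∀ H : MHd A, H.reduct.binders = H.binders
  | .hole => rfl
  | .push N a H => by simp [MHd.reduct, Hd.binders, MHd.binders, MHd.binders_reduct H]
  | .pop a H => by simp [MHd.reduct, Hd.binders, MHd.binders, MHd.binders_reduct H]

theorem MHd.binders_rename {A : Type} (f : Nat → Nat) :
    ∀ H : MHd A, (H.rename f).binders = H.binders
  | .hole => rfl
  | .push N a H => by simp [MHd.rename, MHd.binders, MHd.binders_rename f H]
  | .pop a H => by simp [MHd.rename, MHd.binders, MHd.binders_rename (Tm.liftF f) H]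

mutual
theorem MTm.reduct_rename {A : Type} :
    ∀ (f : Nat → Nat) (M : MTm A), (MTm.rename f M).reduct = Tm.rename f M.reduct
  | f, .star => rfl
  | f, .var n M => by simp [MTm.rename, MTm.reduct, Tm.rename, MTm.reduct_rename f M]
  | f, .push N a M => by
      simp [MTm.rename, MTm.reduct, Tm.rename, MTm.reduct_rename f N, MTm.reduct_rename f M]
  | f, .pop a M => by
      simp [MTm.rename, MTm.reduct, Tm.rename, MTm.reduct_rename (Tm.liftF f) M]
  | f, .redex N a H M => by
      simp only [MTm.rename, MTm.reduct]
      rw [MHd.reduct_rename f H, MTm.reduct_rename f N,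
        MTm.reduct_rename (Tm.liftF^[H.binders + 1] f) M,
        Hd.rename_plug, Tm.rename_subst1, Hd.binders_rename, MHd.binders_reduct]
      congr 2
      · rw [Tm.rename_rename, Tm.rename_rename]
        exact Tm.rename_ext
          (fun n => by
            show f n + H.binders = Tm.liftF^[H.binders] f (n + H.binders)
            exact (Tm.liftF_iter_add f H.binders n).symm) N.reduct
      · rw [Function.iterate_succ_apply' Tm.liftF H.binders f]
theorem MHd.reduct_rename {A : Type} :
    ∀ (f : Nat → Nat) (H : MHd A), (MHd.rename f H).reduct = Hd.rename f H.reduct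
  | f, .hole => rfl
  | f, .push N a H => by
      simp [MHd.rename, MHd.reduct, Hd.rename, MTm.reduct_rename f N, MHd.reduct_rename f H]
  | f, .pop a H => by
      simp [MHd.rename, MHd.reduct, Hd.rename, MHd.reduct_rename (Tm.liftF f) H]
end

theorem MTm.reduct_comp {A : Type} :
    ∀ M P : MTm A, (M.comp P).reduct = M.reduct.comp P.reduct
  | .star, P => rfl
  | .var n M, P => by simp [MTm.comp, MTm.reduct, Tm.comp, MTm.reduct_comp M P]
  | .push Q a M, P => by simp [MTm.comp, MTm.reduct, Tm.comp, MTm.reduct_comp M P]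
  | .pop a M, P => by
      simp [MTm.comp, MTm.reduct, Tm.comp,
        MTm.reduct_comp M (P.rename Nat.succ), MTm.reduct_rename]
  | .redex N a H M, P => by
      simp only [MTm.comp, MTm.reduct]
      rw [MTm.reduct_comp M (P.rename (· + (H.binders + 1))), MTm.reduct_rename,
        Hd.comp_plug, Tm.subst1_comp, Tm.rename_rename, MHd.binders_reduct]
      congr 2

/-- Parallel reduction commutes with composition: the marked reduct of a
composition is the composition of the marked reducts, `(M;N)_X = M_X ; N_X`. -/
theorem fmc_reduct_comp {A : Type} (M N : MTm A) (hM : M.WF) (hN : N.WF) :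
    (M.comp N).reduct = M.reduct.comp N.reduct :=
  MTm.reduct_comp M N
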